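/- Let c₁ > 1 be a real constant and let w ≥ 1 be an integer. For integers D ≥ w and k ≥ 0, define N(D,k) = ∑ over all tuples (a(w), a(w+1), …, a(D)) of nonnegative integers with ∑ᵢ a(i) = k of ∏_{i=w}^{D} 1/(i^{c₁·a(i)} · a(i)!). Then N(D,k) ≤ (1/k!) · ∏_{i=w+1}^{D} (1 + 1/i^{c₁})^k. -/
import Mathlib


open Finset Real

noncomputable def NDK (c₁ : ℝ) (w D k : ℕ) : ℝ :=
  ∑ a ∈ Finset.Nat.antidiagonalTuple (D - w + 1) k,
    ∏ i : Fin (D - w + 1), 1 / (((w + (i : ℕ) : ℕ) : ℝ) ^ (c₁ * a i) * (Nat.factorial (a i)))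

lemma one_add_sum_le_prod_one_add (s : Finset ℕ) (f : ℕ → ℝ) (hf : ∀ i ∈ s, 0 ≤ f i) :
    1 + ∑ i ∈ s, f i ≤ ∏ i ∈ s, (1 + f i) := by
  induction s using Finset.cons_induction with
  | empty => simp
  | cons a s ha ih =>
    rw [Finset.sum_cons, Finset.prod_cons]
    have h1 : 0 ≤ f a := hf a (Finset.mem_cons_self a s)
    have h2 : 1 + ∑ i ∈ s, f i ≤ ∏ i ∈ s, (1 + f i) :=
      ih fun i hi => hf i (Finset.mem_cons_of_mem hi)
    have h3 : (0:ℝ) ≤ ∑ i ∈ s, f i := Finset.sum_nonneg fun i hi => hf i (Finset.mem_cons_of_mem hi)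
    nlinarith

theorem stmt_0 (c₁ : ℝ) (hc₁ : 1 < c₁) (w : ℕ) (hw : 1 ≤ w) (D k : ℕ) (hD : w ≤ D) :
    NDK c₁ w D k ≤ (1 / (Nat.factorial k : ℝ)) *
      ∏ i ∈ Finset.Icc (w + 1) D, (1 + 1 / ((i : ℝ) ^ c₁)) ^ k := by
  set n := D - w + 1 with hn
  set x : Fin n → ℝ := fun i => 1 / (((w + (i : ℕ) : ℕ) : ℝ) ^ c₁) with hx
  have hxnonneg : ∀ i, 0 ≤ x i := by
    intro i
    positivity
  -- Step 1: NDK = (∑ x)^k / k!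
  have key : NDK c₁ w D k = (∑ i, x i) ^ k / (Nat.factorial k : ℝ) := by
    rw [NDK, eq_div_iff (by positivity : (Nat.factorial k : ℝ) ≠ 0)]
    rw [Finset.sum_pow_eq_sum_piAntidiag Finset.univ x k,
      Finset.piAntidiag_univ_fin_eq_antidiagonalTuple k n, Finset.sum_mul]
    apply Finset.sum_congr rfl
    intro a ha
    have hsum : ∑ i, a i = k := by
      have := Finset.Nat.mem_antidiagonalTuple.mp ha
      exact this
    have hspec : (∏ i, (Nat.factorial (a i) : ℝ)) * (Nat.multinomial Finset.univ a : ℝ)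
        = (Nat.factorial k : ℝ) := by
      rw [← Nat.cast_prod, ← Nat.cast_mul, Nat.multinomial_spec, hsum]
    have hbase : ∀ i : Fin n, ((w + (i : ℕ) : ℕ) : ℝ) ^ (c₁ * (a i))
        = (((w + (i : ℕ) : ℕ) : ℝ) ^ c₁) ^ (a i) := by
      intro i
      rw [← Real.rpow_natCast (((w + (i : ℕ) : ℕ) : ℝ) ^ c₁) (a i),
        ← Real.rpow_mul (by positivity)]
    calc (∏ i : Fin n, 1 / (((w + (i : ℕ) : ℕ) : ℝ) ^ (c₁ * a i) * (Nat.factorial (a i))))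
          * (Nat.factorial k : ℝ)
        = (∏ i, x i ^ a i / (Nat.factorial (a i) : ℝ)) * (Nat.factorial k : ℝ) := by
          congr 1
          apply Finset.prod_congr rfl
          intro i _
          rw [hbase i, hx]
          rw [div_pow, one_pow]
          have hb : (0:ℝ) < ((w + (i : ℕ) : ℕ) : ℝ) ^ c₁ := by positivity
          field_simp
      _ = (Nat.multinomial Finset.univ a : ℝ) * ∏ i, x i ^ a i := by
          rw [Finset.prod_div_distrib]
          rw [div_mul_eq_mul_div, ← hspec]
          have hfpos : (0:ℝ) < ∏ i, (Nat.factorial (a i) : ℝ) := by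
            apply Finset.prod_pos
            intro i _
            exact_mod_cast Nat.factorial_pos (a i)
          field_simp
          ring
  rw [key, div_eq_mul_one_div, mul_comm, Finset.prod_pow]
  apply mul_le_mul_of_nonneg_left ?_ (by positivity)
  apply pow_le_pow_left₀ (Finset.sum_nonneg fun i _ => hxnonneg i)
  ·     -- ∑ x ≤ ∏_{i ∈ Icc (w+1) D} (1 + 1/i^c₁)
    have hsum_eq : ∑ i, x i = ∑ j ∈ Finset.Icc w D, 1 / ((j : ℝ) ^ c₁) := by
      rw [Fin.sum_univ_eq_sum_range (fun j => 1 / ((w + j : ℕ) : ℝ) ^ c₁) n,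
        ← Finset.Ico_add_one_right_eq_Icc, Finset.sum_Ico_eq_sum_range]
      have : D + 1 - w = n := by omega
      rw [this]
    rw [hsum_eq]
    have hsplit : Finset.Icc w D = insert w (Finset.Icc (w + 1) D) := by
      ext j
      simp only [Finset.mem_Icc, Finset.mem_insert]
      omega
    rw [hsplit, Finset.sum_insert (by simp)]
    have hw1 : 1 / ((w : ℝ) ^ c₁) ≤ 1 := by
      rw [div_le_one (by positivity)]
      calc (1:ℝ) = (w:ℝ) ^ (0:ℝ) := by simp
        _ ≤ (w : ℝ) ^ c₁ := by
          apply Real.rpow_le_rpow_of_exponent_le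
          · exact_mod_cast hw
          · linarith
    calc 1 / ((w : ℝ) ^ c₁) + ∑ j ∈ Finset.Icc (w + 1) D, 1 / ((j : ℝ) ^ c₁)
        ≤ 1 + ∑ j ∈ Finset.Icc (w + 1) D, 1 / ((j : ℝ) ^ c₁) := by linarith
      _ ≤ ∏ j ∈ Finset.Icc (w + 1) D, (1 + 1 / ((j : ℝ) ^ c₁)) :=
          one_add_sum_le_prod_one_add _ _ fun i _ => by positivity
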